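/- Let 𝔤 be a finite-dimensional real Lie algebra with Killing form K, let 𝔥 ⊆ 𝔤 be a Lie subalgebra such that the restriction of K to 𝔥 is nondegenerate, set 𝔪 = 𝔥^⊥ (so that 𝔤 = 𝔥 ⊕ 𝔪 as vector spaces), let P : 𝔤 → 𝔪 be the linear projection onto 𝔪 along 𝔥, and let ⟨·,·⟩ be any inner product on 𝔪. If the restriction of K to 𝔪 is not identically zero, then there exists a nonzero vector Y ∈ 𝔪 such that ⟨Y, P([Y,Z])⟩ = 0 for all Z ∈ 𝔤. -/

import Mathlib

/-- The `K`-orthogonal complement of a Lie subalgebra `H`, where `K` is the Killing form: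
`H^⊥ = {x ∈ 𝔤 : K(x, h) = 0 for all h ∈ H}`. -/
def killingOrth (R L : Type*) [CommRing R] [LieRing L] [LieAlgebra R L]
    (H : LieSubalgebra R L) : Submodule R L where
  carrier := {x | ∀ h ∈ H, killingForm R L x h = 0}
  add_mem' := fun hx hy h hh => by
    rw [map_add, LinearMap.add_apply, hx h hh, hy h hh, add_zero]
  zero_mem' := fun h hh => by simp
  smul_mem' := fun c x hx h hh => by
    rw [map_smul, LinearMap.smul_apply, hx h hh, smul_zero]


/-!
Represent the restriction of `K` to `𝔪` by an operator that is symmetric for `⟨·,·⟩`. It is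
nonzero, so it has an eigenvector `Y` with eigenvalue `μ ≠ 0`, and then `⟨Y, ·⟩ = μ⁻¹ K(Y, ·)`
on `𝔪`. Since `Y` is `K`-orthogonal to `𝔥`, `K(Y, P[Y,Z]) = K(Y, [Y,Z]) = K([Y,Y], Z) = 0`.
-/

open Module LinearMap

theorem LinearMap.IsSymmetric.exists_hasEigenvector_of_ne_zero {𝕜 E : Type*} [RCLike 𝕜]
    [NormedAddCommGroup E] [InnerProductSpace 𝕜 E] [FiniteDimensional 𝕜 E] {T : E →ₗ[𝕜] E}
    (hT : T.IsSymmetric) (hT0 : T ≠ 0) : ∃ μ : 𝕜, μ ≠ 0 ∧ ∃ v, End.HasEigenvector T μ v := by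
  by_contra! h
  refine hT0 ((hT.eigenvectorBasis rfl).toBasis.ext fun i => ?_)
  have hμ : (hT.eigenvalues rfl i : 𝕜) = 0 := by
    by_contra hμ
    exact h _ hμ _ (hT.hasEigenvector_eigenvectorBasis rfl i)
  simp [hT.apply_eigenvectorBasis, hμ]

namespace LinearMap.BilinForm

variable {V : Type*} [AddCommGroup V] [Module ℝ V]

abbrev innerProductSpaceCore (ip : LinearMap.BilinForm ℝ V) (ip_symm : ∀ u v, ip u v = ip v u)
    (ip_posdef : ∀ u, u ≠ 0 → 0 < ip u u) : InnerProductSpace.Core ℝ V where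
  inner u v := ip u v
  conj_inner_symm u v := by simp [ip_symm u v]
  re_inner_nonneg u := by
    rcases eq_or_ne u 0 with rfl | hu
    · simp
    · exact (ip_posdef u hu).le
  add_left u v w := by simp
  smul_left u v c := by simp
  definite u := not_imp_not.1 fun hu => (ip_posdef u hu).ne'

theorem nondegenerate_of_pos {ip : LinearMap.BilinForm ℝ V} (ip_posdef : ∀ u, u ≠ 0 → 0 < ip u u) :
    ip.Nondegenerate :=
  have eq_zero : ∀ u, ip u u = 0 → u = 0 := fun u => not_imp_not.1 fun hu => (ip_posdef u hu).ne'
  ⟨fun u hu => eq_zero u (hu u), fun u hu => eq_zero u (hu u)⟩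

/-- A nonzero symmetric form `B` has an eigenvector with respect to an inner product `ip`. -/
theorem exists_ne_zero_forall_eq_mul [FiniteDimensional ℝ V] (ip : LinearMap.BilinForm ℝ V)
    (ip_symm : ∀ u v, ip u v = ip v u) (ip_posdef : ∀ u, u ≠ 0 → 0 < ip u u)
    {B : LinearMap.BilinForm ℝ V} (hB_symm : ∀ u v, B u v = B v u) (hB : B ≠ 0) :
    ∃ v, v ≠ 0 ∧ ∃ c : ℝ, ∀ w, ip v w = c * B v w := by
  let core := innerProductSpaceCore ip ip_symm ip_posdef
  let _ : NormedAddCommGroup V := core.toNormedAddCommGroup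
  let _ : InnerProductSpace ℝ V := .ofCore core.toCore
  set T := B.symmCompOfNondegenerate ip (nondegenerate_of_pos ip_posdef)
  have hT : ∀ u w, ip (T u) w = B u w := fun u w =>
    symmCompOfNondegenerate_left_apply B _ w u
  have hT_symm : T.IsSymmetric := fun u w => by
    change ip (T u) w = ip u (T w)
    rw [hT, ip_symm, hT, hB_symm]
  have hT0 : T ≠ 0 := fun h => hB <| ext₂ fun u w => by simp [← hT, h]
  obtain ⟨μ, hμ, v, hv⟩ := hT_symm.exists_hasEigenvector_of_ne_zero hT0
  refine ⟨v, hv.2, μ⁻¹, fun w => ?_⟩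
  rw [← hT, hv.apply_eq_smul, map_smul, smul_apply, smul_eq_mul, inv_mul_cancel_left₀ hμ]

end LinearMap.BilinForm

section Killing

variable {R L : Type*} [CommRing R] [LieRing L] [LieAlgebra R L]

theorem killingForm_apply_lie_self (x z : L) : killingForm R L x ⁅x, z⁆ = 0 := by
  rw [← LieModule.traceForm_apply_lie_apply, lie_self, map_zero, LinearMap.zero_apply]

theorem killingForm_apply_eq_of_sub_mem {H : LieSubalgebra R L} {y x x' : L}
    (hy : y ∈ killingOrth R L H) (hx : x - x' ∈ H) :
    killingForm R L y x' = killingForm R L y x := by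
  rw [← sub_eq_zero, ← map_sub, ← neg_sub, map_neg, hy _ hx, neg_zero]

end Killing

theorem exists_geodesic_vector_of_killing_not_zero_on_orth_general
    (L : Type*) [LieRing L] [LieAlgebra ℝ L] [Module.Finite ℝ L]
    (H : LieSubalgebra ℝ L)
    (P : L →ₗ[ℝ] L)
    (hP1 : ∀ x : L, P x ∈ killingOrth ℝ L H)
    (hP2 : ∀ x : L, x - P x ∈ H)
    (ip : killingOrth ℝ L H →ₗ[ℝ] killingOrth ℝ L H →ₗ[ℝ] ℝ)
    (ip_symm : ∀ u v : killingOrth ℝ L H, ip u v = ip v u)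
    (ip_posdef : ∀ u : killingOrth ℝ L H, u ≠ 0 → 0 < ip u u)
    (hK : ∃ u v : killingOrth ℝ L H, killingForm ℝ L (u : L) (v : L) ≠ 0) :
    ∃ Y : killingOrth ℝ L H, Y ≠ 0 ∧
      ∀ Z : L, ip Y ⟨P ⁅(Y : L), Z⁆, hP1 ⁅(Y : L), Z⁆⟩ = 0 := by
  set B := (killingForm ℝ L).restrict (killingOrth ℝ L H)
  have hB_symm : ∀ u v, B u v = B v u := fun u v => LieModule.traceForm_comm ℝ L L u v
  have hB : B ≠ 0 := by
    obtain ⟨u, v, huv⟩ := hK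
    exact fun h => huv (congr_fun₂ h u v)
  obtain ⟨Y, hY, c, hc⟩ := BilinForm.exists_ne_zero_forall_eq_mul ip ip_symm ip_posdef hB_symm hB
  refine ⟨Y, hY, fun Z => ?_⟩
  rw [hc]
  change c * killingForm ℝ L Y (P ⁅(Y : L), Z⁆) = 0
  rw [killingForm_apply_eq_of_sub_mem Y.2 (hP2 _), killingForm_apply_lie_self, mul_zero]

/-- Let `𝔤` be a finite-dimensional real Lie algebra whose Killing form `K` restricts
nondegenerately to a Lie subalgebra `𝔥`, let `𝔪 = 𝔥^⊥`, let `P` be the linear projection onto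
`𝔪` along `𝔥`, and let `⟨·,·⟩` be an inner product (a symmetric positive definite bilinear
form `ip`) on `𝔪`.  If the restriction of `K` to `𝔪` is not identically zero, then there is a
nonzero `Y ∈ 𝔪` with `⟨Y, P [Y, Z]⟩ = 0` for all `Z ∈ 𝔤` (a geodesic vector). -/
theorem exists_geodesic_vector_of_killing_not_zero_on_orth
    (L : Type*) [LieRing L] [LieAlgebra ℝ L] [Module.Finite ℝ L]
    (H : LieSubalgebra ℝ L)
    (hnd : ∀ h ∈ H, (∀ h' ∈ H, killingForm ℝ L h h' = 0) → h = 0)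
    (P : L →ₗ[ℝ] L)
    (hP1 : ∀ x : L, P x ∈ killingOrth ℝ L H)
    (hP2 : ∀ x : L, x - P x ∈ H)
    (ip : killingOrth ℝ L H →ₗ[ℝ] killingOrth ℝ L H →ₗ[ℝ] ℝ)
    (ip_symm : ∀ u v : killingOrth ℝ L H, ip u v = ip v u)
    (ip_posdef : ∀ u : killingOrth ℝ L H, u ≠ 0 → 0 < ip u u)
    (hK : ∃ u v : killingOrth ℝ L H, killingForm ℝ L (u : L) (v : L) ≠ 0) :
    ∃ Y : killingOrth ℝ L H, Y ≠ 0 ∧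
      ∀ Z : L, ip Y ⟨P ⁅(Y : L), Z⁆, hP1 ⁅(Y : L), Z⁆⟩ = 0 :=
  exists_geodesic_vector_of_killing_not_zero_on_orth_general L H P hP1 hP2 ip ip_symm ip_posdef hK
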